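/- For every Grand Dyck path γ of semilength n, the number of Grand Dyck paths of semilength n that cover γ in the Grand Dyck lattice GD_n equals the number of occurrences of the factor DU in γ, and the number of Grand Dyck paths of semilength n covered by γ equals the number of occurrences of the factor UD in γ. -/

import Mathlib

/-
A path `w` covers `γ` exactly when `w` arises from `γ` by turning one valley `DU` into a
peak `UD`. Such a swap raises the height by `2` at a single index and leaves it unchanged
elsewhere; since two paths of equal length have heights of equal parity, nothing fits strictly
in between. Conversely, if `γ < w`, choose an index `m` with `h_γ(m) < h_w(m)` at which `h_γ(m)`
is minimal: a `U` before `m` or a `D` after `m` would produce an index with the same property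
and a smaller height, so `γ` has a valley at `m`, and raising it stays below `w` by the parity
gap. The paths covered by `γ` are handled by the mirror symmetry exchanging `U` and `D`.
-/

/-- Steps of a (Grand) Dyck path: up `U = (1,1)` and down `D = (1,-1)`. -/
inductive Step : Type
  | U : Step
  | D : Step
  deriving DecidableEq

/-- The height of a path: number of up steps minus number of down steps. -/
def height (w : List Step) : ℤ := (w.count Step.U : ℤ) - (w.count Step.D : ℤ)

/-- A Dyck path of semilength `n`: a word of length `2n` with `n` up steps
(hence `n` down steps) all of whose prefixes have nonnegative height. -/
def IsDyck (n : ℕ) (w : List Step) : Prop :=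
  w.length = 2 * n ∧ w.count Step.U = n ∧ ∀ i : ℕ, 0 ≤ height (w.take i)

/-- A Grand Dyck path of semilength `n`: a word of length `2n` with `n` up steps. -/
def IsGrandDyck (n : ℕ) (w : List Step) : Prop :=
  w.length = 2 * n ∧ w.count Step.U = n

/-- The order on paths: pointwise comparison of the heights after each number of steps. -/
def PathLe (w w' : List Step) : Prop :=
  ∀ i : ℕ, height (w.take i) ≤ height (w'.take i)

/-- Strict order on paths. -/
def PathLt (w w' : List Step) : Prop := PathLe w w' ∧ ¬ PathLe w' w

/-- `Covers P w w'` : within the class of paths satisfying `P`, the path `w'` covers `w`,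
i.e. `w < w'` and no path of the class lies strictly between them. -/
def Covers (P : List Step → Prop) (w w' : List Step) : Prop :=
  P w ∧ P w' ∧ PathLt w w' ∧ ∀ z : List Step, P z → ¬ (PathLt w z ∧ PathLt z w')

/-- Number of occurrences of the factor `xy` in the word `w`. -/
def countFactor (x y : Step) (w : List Step) : ℕ :=
  ((Finset.range w.length).filter
    (fun i => w[i]? = some x ∧ w[i + 1]? = some y)).card

/-- Number of occurrences of the factor `xy` in the word `w` whose starting height
(the height after the first `i` steps, the factor occupying positions `i` and `i+1`,
`0`-indexed) is at least `1`. -/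
def countFactorHigh (x y : Step) (w : List Step) : ℕ :=
  ((Finset.range w.length).filter
    (fun i => w[i]? = some x ∧ w[i + 1]? = some y ∧ 1 ≤ height (w.take i))).card

namespace Step

def sign : Step → ℤ
  | U => 1
  | D => -1

lemma sign_injective : Function.Injective sign := by
  intro s t; cases s <;> cases t <;> simp [sign]

lemma neg_one_le_sign (s : Step) : -1 ≤ s.sign := by cases s <;> simp [sign]

lemma sign_le_one (s : Step) : s.sign ≤ 1 := by cases s <;> simp [sign]

def flip : Step → Step
  | U => D
  | D => U

@[simp] lemma flip_U : U.flip = D := rfl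

@[simp] lemma flip_D : D.flip = U := rfl

@[simp] lemma flip_flip (s : Step) : s.flip.flip = s := by cases s <;> rfl

@[simp] lemma flip_comp_flip : flip ∘ flip = id := funext flip_flip

lemma flip_injective : Function.Injective flip :=
  Function.LeftInverse.injective flip_flip

lemma map_flip_map_flip (w : List Step) : (w.map flip).map flip = w := by
  simp

end Step

lemma List.eq_take_append_cons_cons_drop {α : Type*} {l : List α} {i : ℕ} {x y : α}
    (hx : l[i]? = some x) (hy : l[i + 1]? = some y) :
    l = l.take i ++ x :: y :: l.drop (i + 2) := by
  obtain ⟨hi, rfl⟩ := List.getElem?_eq_some_iff.mp hy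
  obtain ⟨-, rfl⟩ := List.getElem?_eq_some_iff.mp hx
  rw [List.getElem_cons_drop, List.getElem_cons_drop, List.take_append_drop]

@[simp] lemma height_nil : height [] = 0 := rfl

@[simp] lemma height_cons (s : Step) (w : List Step) : height (s :: w) = s.sign + height w := by
  cases s <;> simp [height, Step.sign] <;> ring

lemma height_append (u v : List Step) : height (u ++ v) = height u + height v := by
  induction u with
  | nil => simp
  | cons s u ih => simp [ih, add_assoc]

lemma count_U_add_count_D (w : List Step) : w.count Step.U + w.count Step.D = w.length := by
  induction w with
  | nil => rfl
  | cons s w ih => cases s <;> simp <;> omega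

lemma height_eq_two_mul_count_sub_length (w : List Step) :
    height w = 2 * (w.count Step.U : ℤ) - w.length := by
  have := count_U_add_count_D w
  unfold height
  omega

lemma height_take_succ {w : List Step} {i : ℕ} (hi : i < w.length) :
    height (w.take (i + 1)) = height (w.take i) + w[i].sign := by
  rw [List.take_add_one, List.getElem?_eq_getElem hi, Option.toList_some, height_append,
    height_cons, height_nil, add_zero]

/-- Heights of equally long paths after the same number of steps have the same parity. -/
lemma add_two_le_height_take_of_lt {w w' : List Step} (hl : w.length = w'.length) {i : ℕ}
    (h : height (w.take i) < height (w'.take i)) :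
    height (w.take i) + 2 ≤ height (w'.take i) := by
  have e := height_eq_two_mul_count_sub_length (w.take i)
  have e' := height_eq_two_mul_count_sub_length (w'.take i)
  rw [List.length_take, hl] at e
  rw [List.length_take] at e'
  omega

lemma PathLe.antisymm {w w' : List Step} (hl : w.length = w'.length) (h : PathLe w w')
    (h' : PathLe w' w) : w = w' := by
  refine List.ext_getElem hl fun i hi hi' => Step.sign_injective ?_
  have := le_antisymm (h (i + 1)) (h' (i + 1))
  rw [height_take_succ hi, height_take_succ hi', le_antisymm (h i) (h' i)] at this
  exact add_left_cancel this

lemma height_take_swap (a b : List Step) (j : ℕ) :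
    height ((a ++ Step.U :: Step.D :: b).take j) =
      height ((a ++ Step.D :: Step.U :: b).take j) + if j = a.length + 1 then 2 else 0 := by
  rw [List.take_append, List.take_append, height_append, height_append]
  rcases Nat.lt_trichotomy j (a.length + 1) with h | rfl | h
  · rw [Nat.sub_eq_zero_of_le (by omega), if_neg (by omega)]
    simp
  · simp [Step.sign]
    ring
  · obtain ⟨k, rfl⟩ : ∃ k, j = a.length + 2 + k := ⟨j - (a.length + 2), by omega⟩
    rw [if_neg (by omega), show a.length + 2 + k - a.length = k + 2 by omega]
    simp [Step.sign]

section GrandDyck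

variable {n : ℕ}

lemma IsGrandDyck.perm {w w' : List Step} (hw : IsGrandDyck n w) (h : w.Perm w') :
    IsGrandDyck n w' :=
  ⟨h.length_eq ▸ hw.1, h.count_eq Step.U ▸ hw.2⟩

lemma IsGrandDyck.height_take_of_le {w : List Step} (hw : IsGrandDyck n w) {i : ℕ}
    (hi : 2 * n ≤ i) : height (w.take i) = 0 := by
  rw [List.take_of_length_le (hw.1 ▸ hi), height_eq_two_mul_count_sub_length, hw.1, hw.2]
  push_cast
  ring

lemma covers_swap_valley {a b : List Step} (h : IsGrandDyck n (a ++ Step.D :: Step.U :: b)) :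
    Covers (IsGrandDyck n) (a ++ Step.D :: Step.U :: b) (a ++ Step.U :: Step.D :: b) := by
  have swap := height_take_swap a b
  set γ := a ++ Step.D :: Step.U :: b
  set m := a.length + 1
  refine ⟨h, h.perm (.append_left a (.swap _ _ _)), ⟨fun i => ?_, fun hle => ?_⟩, ?_⟩
  · rw [swap]
    split_ifs <;> omega
  · have := hle m
    rw [swap, if_pos rfl] at this
    omega
  rintro z hz ⟨⟨hγz, hzγ⟩, hzγ', hγ'z⟩
  have off (i : ℕ) (hi : i ≠ m) : height (z.take i) = height (γ.take i) := by
    have := hzγ' i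
    rw [swap, if_neg hi, add_zero] at this
    exact le_antisymm this (hγz i)
  by_cases hm : height (γ.take m) < height (z.take m)
  · refine hγ'z fun i => ?_
    by_cases hi : i = m
    · subst hi
      rw [swap, if_pos rfl]
      exact add_two_le_height_take_of_lt (by rw [h.1, hz.1]) hm
    · rw [swap, if_neg hi, add_zero, off i hi]
  · refine hzγ fun i => ?_
    by_cases hi : i = m
    · exact hi ▸ not_lt.mp hm
    · exact (off i hi).le

lemma exists_valley_of_pathLt {γ w : List Step} (hγ : IsGrandDyck n γ)
    (hw : IsGrandDyck n w) (hlt : PathLt γ w) :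
    ∃ i, γ[i]? = some Step.D ∧ γ[i + 1]? = some Step.U ∧
      height (γ.take (i + 1)) < height (w.take (i + 1)) := by
  have hend (i : ℕ) (hi : γ.length ≤ i) : height (γ.take i) = height (w.take i) := by
    rw [hγ.height_take_of_le (hγ.1 ▸ hi), hw.height_take_of_le (hγ.1 ▸ hi)]
  set S := (Finset.range (γ.length + 1)).filter fun m => height (γ.take m) < height (w.take m)
  have mem_S {m : ℕ} (hm : m ≤ γ.length) (h : height (γ.take m) < height (w.take m)) :
      m ∈ S :=
    Finset.mem_filter.mpr ⟨Finset.mem_range.mpr (by omega), h⟩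
  have hS : S.Nonempty := by
    obtain ⟨i, hi⟩ := not_forall.mp hlt.2
    refine ⟨i, mem_S ?_ (not_le.mp hi)⟩
    by_contra! h
    exact hi (hend i h.le).ge
  obtain ⟨m, hmS, hmin⟩ := S.exists_min_image (fun m => height (γ.take m)) hS
  obtain ⟨-, hgap⟩ := Finset.mem_filter.mp hmS
  obtain ⟨i, rfl⟩ : ∃ i, m = i + 1 :=
    Nat.exists_eq_succ_of_ne_zero fun h => by simp [h] at hgap
  have hilen : i + 1 < γ.length := lt_of_not_ge fun h => hgap.ne (hend _ h)
  have hwlen : γ.length = w.length := hγ.1.trans hw.1.symm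
  refine ⟨i, ?_, ?_, hgap⟩
  · have hγs := height_take_succ (w := γ) (i := i) (by omega)
    have hws := height_take_succ (w := w) (i := i) (by omega)
    have := w[i].sign_le_one
    rw [List.getElem?_eq_getElem (by omega)]
    cases hs : γ[i]
    · simp only [hs, Step.sign] at hγs
      have := hmin i (mem_S (by omega) (by omega))
      omega
    · rfl
  · have hγs := height_take_succ hilen
    have hws := height_take_succ (hwlen ▸ hilen)
    have := w[i + 1].neg_one_le_sign
    rw [List.getElem?_eq_getElem hilen]
    cases hs : γ[i + 1]
    · rfl
    · simp only [hs, Step.sign] at hγs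
      have := hmin (i + 1 + 1) (mem_S (by omega) (by omega))
      omega

lemma exists_valley_swap_le {γ w : List Step} (hγ : IsGrandDyck n γ)
    (hw : IsGrandDyck n w) (hlt : PathLt γ w) :
    ∃ a b, γ = a ++ Step.D :: Step.U :: b ∧ PathLe (a ++ Step.U :: Step.D :: b) w := by
  obtain ⟨i, hD, hU, hgap⟩ := exists_valley_of_pathLt hγ hw hlt
  have hdecomp := List.eq_take_append_cons_cons_drop hD hU
  have hi : (γ.take i).length = i :=
    List.length_take_of_le (List.getElem?_eq_some_iff.mp hD).1.le
  refine ⟨_, _, hdecomp, fun j => ?_⟩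
  rw [height_take_swap, ← hdecomp, hi]
  split_ifs with hj
  · exact hj ▸ add_two_le_height_take_of_lt (hγ.1.trans hw.1.symm) hgap
  · simpa using hlt.1 j

theorem covers_iff_exists_valley {γ w : List Step} (hγ : IsGrandDyck n γ) :
    Covers (IsGrandDyck n) γ w ↔
      ∃ a b, γ = a ++ Step.D :: Step.U :: b ∧ w = a ++ Step.U :: Step.D :: b := by
  refine ⟨fun ⟨_, hw, hlt, hmin⟩ => ?_,
    fun ⟨a, b, hγa, hwa⟩ => hγa ▸ hwa ▸ covers_swap_valley (hγa ▸ hγ)⟩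
  obtain ⟨a, b, rfl, hzw⟩ := exists_valley_swap_le hγ hw hlt
  obtain ⟨-, hz, hγz, -⟩ := covers_swap_valley hγ
  refine ⟨a, b, rfl, PathLe.antisymm (hw.1.trans hz.1.symm) ?_ hzw⟩
  by_contra hwz
  exact hmin _ hz ⟨hγz, hzw, hwz⟩

lemma height_map_flip (w : List Step) : height (w.map Step.flip) = -height w := by
  induction w with
  | nil => rfl
  | cons s w ih => cases s <;> simp [ih, Step.sign] <;> ring

lemma pathLe_map_flip_iff {w w' : List Step} :
    PathLe (w.map Step.flip) (w'.map Step.flip) ↔ PathLe w' w := by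
  simp only [PathLe, ← List.map_take, height_map_flip, neg_le_neg_iff]

lemma pathLt_map_flip_iff {w w' : List Step} :
    PathLt (w.map Step.flip) (w'.map Step.flip) ↔ PathLt w' w := by
  simp only [PathLt, pathLe_map_flip_iff]

lemma isGrandDyck_map_flip_iff {w : List Step} :
    IsGrandDyck n (w.map Step.flip) ↔ IsGrandDyck n w := by
  have := count_U_add_count_D w
  have hU := List.count_map_of_injective w Step.flip Step.flip_injective Step.D
  simp only [IsGrandDyck, List.length_map, Step.flip_D] at hU ⊢
  omega

lemma Covers.map_flip {w w' : List Step} (h : Covers (IsGrandDyck n) w w') :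
    Covers (IsGrandDyck n) (w'.map Step.flip) (w.map Step.flip) := by
  obtain ⟨hw, hw', hlt, hmin⟩ := h
  refine ⟨isGrandDyck_map_flip_iff.mpr hw', isGrandDyck_map_flip_iff.mpr hw,
    pathLt_map_flip_iff.mpr hlt, fun z hz ⟨h₁, h₂⟩ => ?_⟩
  rw [← Step.map_flip_map_flip z] at hz h₁ h₂
  rw [isGrandDyck_map_flip_iff] at hz
  rw [pathLt_map_flip_iff] at h₁ h₂
  exact hmin _ hz ⟨h₂, h₁⟩

theorem covers_iff_exists_peak {γ w : List Step} (hγ : IsGrandDyck n γ) :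
    Covers (IsGrandDyck n) w γ ↔
      ∃ a b, γ = a ++ Step.U :: Step.D :: b ∧ w = a ++ Step.D :: Step.U :: b := by
  have hcov : Covers (IsGrandDyck n) w γ ↔
      Covers (IsGrandDyck n) (γ.map Step.flip) (w.map Step.flip) :=
    ⟨Covers.map_flip, fun h => by simpa using h.map_flip⟩
  rw [hcov, covers_iff_exists_valley (isGrandDyck_map_flip_iff.mpr hγ)]
  constructor
  · rintro ⟨a, b, hγa, hwa⟩
    refine ⟨a.map Step.flip, b.map Step.flip, ?_, ?_⟩
    · simpa using congrArg (List.map Step.flip) hγa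
    · simpa using congrArg (List.map Step.flip) hwa
  · rintro ⟨a, b, rfl, rfl⟩
    exact ⟨a.map Step.flip, b.map Step.flip, by simp, by simp⟩

end GrandDyck

theorem card_swap_factor_eq_countFactor {x y : Step} (hxy : x ≠ y) (γ : List Step) :
    Nat.card {w // ∃ a b, γ = a ++ x :: y :: b ∧ w = a ++ y :: x :: b} =
      countFactor x y γ := by
  classical
  set S := (Finset.range γ.length).filter fun i => γ[i]? = some x ∧ γ[i + 1]? = some y
  set f : ℕ → List Step := fun i => γ.take i ++ y :: x :: γ.drop (i + 2)
  have hmem (w : List Step) :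
      (∃ a b, γ = a ++ x :: y :: b ∧ w = a ++ y :: x :: b) ↔ w ∈ S.image f := by
    simp only [Finset.mem_image, Finset.mem_filter, Finset.mem_range, S, f]
    constructor
    · rintro ⟨a, b, rfl, rfl⟩
      refine ⟨a.length, ⟨by simp, by simp, by simp⟩, ?_⟩
      simp [List.take_left']
    · rintro ⟨i, ⟨-, hx, hy⟩, rfl⟩
      exact ⟨_, _, List.eq_take_append_cons_cons_drop hx hy, rfl⟩
  have hinj : Set.InjOn f S := by
    have key {i j : ℕ} (hi : i ∈ S) (hij : i < j) (hj : j ∈ S) : f i ≠ f j := by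
      obtain ⟨hi, hix, -⟩ := Finset.mem_filter.mp hi
      have hj : j < γ.length := Finset.mem_range.mp (Finset.mem_filter.mp hj).1
      intro h
      have hfi : (f i)[i]? = some y := by
        simp [f, Nat.min_eq_left (Finset.mem_range.mp hi).le]
      have hfj : (f j)[i]? = some x := by
        rw [List.getElem?_append_left (by simp; omega), List.getElem?_take_of_lt hij, hix]
      exact hxy (Option.some.inj (hfj ▸ h ▸ hfi))
    intro i hi j hj h
    by_contra hne
    rcases Nat.lt_or_gt_of_ne hne with hij | hij
    · exact key hi hij hj h
    · exact key hj hij hi h.symm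
  calc Nat.card {w // ∃ a b, γ = a ++ x :: y :: b ∧ w = a ++ y :: x :: b}
      = Nat.card (S.image f) := Nat.card_congr (Equiv.subtypeEquivRight hmem)
    _ = (S.image f).card := Nat.card_eq_finsetCard _
    _ = countFactor x y γ := Finset.card_image_of_injOn hinj

/-- In the Grand Dyck lattice `GD_n`, the number of paths covering a Grand Dyck path `γ`
equals the number of occurrences of the factor `DU` in `γ`, and the number of paths
covered by `γ` equals the number of occurrences of the factor `UD` in `γ`. -/
theorem grandDyck_delta_nabla (n : ℕ) (γ : List Step) (hγ : IsGrandDyck n γ) :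
    Nat.card {w : List Step // Covers (IsGrandDyck n) γ w} = countFactor Step.D Step.U γ ∧
    Nat.card {w : List Step // Covers (IsGrandDyck n) w γ} = countFactor Step.U Step.D γ := by
  constructor
  · rw [← card_swap_factor_eq_countFactor (by decide)]
    exact Nat.card_congr (Equiv.subtypeEquivRight fun w => covers_iff_exists_valley hγ)
  · rw [← card_swap_factor_eq_countFactor (by decide)]
    exact Nat.card_congr (Equiv.subtypeEquivRight fun w => covers_iff_exists_peak hγ)
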